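/- arXiv:1307.5201 — 4 statements merged into one kernel-verified Lean document; each statement's English description precedes it below -/
import Mathlib

section
/- If f : I → ℝ, with I ⊆ (0,∞) an interval, is s-convex in the second sense (i.e., f(αx + βy) ≤ α^s f(x) + β^s f(y) for all x,y ∈ I and α,β ≥ 0 with α+β=1, where s ∈ (0,1] is fixed) and f is nondecreasing, then f is harmonically s-convex, i.e., f(xy/(tx+(1-t)y)) ≤ t^s f(y) + (1-t)^s f(x) for all x,y ∈ I and t ∈ [0,1]. -/
theorem s_convex_nondecreasing_implies_harmonically_s_convex
    (I : Set ℝ) (hI : I ⊆ Set.Ioi (0:ℝ)) (hconv : Convex ℝ I)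
    (f : ℝ → ℝ) (s : ℝ) (hs : s ∈ Set.Ioc (0:ℝ) 1)
    (hsc : ∀ x ∈ I, ∀ y ∈ I, ∀ α β : ℝ, 0 ≤ α → 0 ≤ β → α + β = 1 →
      f (α * x + β * y) ≤ α ^ s * f x + β ^ s * f y)
    (hmono : MonotoneOn f I) :
    ∀ x ∈ I, ∀ y ∈ I, ∀ t ∈ Set.Icc (0:ℝ) 1,
      f (x * y / (t * x + (1 - t) * y)) ≤ t ^ s * f y + (1 - t) ^ s * f x := by
  intro x hx y hy t ht
  obtain ⟨ht0, ht1⟩ := ht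
  have h1t : (0:ℝ) ≤ 1 - t := by linarith
  have hx0 : (0:ℝ) < x := hI hx
  have hy0 : (0:ℝ) < y := hI hy
  have ha0 : 0 < t * x + (1 - t) * y := by
    rcases eq_or_lt_of_le ht0 with h | h
    · have : t = 0 := h.symm
      simp [this]; linarith
    · have h1 : 0 < t * x := mul_pos h hx0
      have h2 : 0 ≤ (1 - t) * y := mul_nonneg h1t hy0.le
      linarith
  set a := t * x + (1 - t) * y with ha
  set H := x * y / a with hH
  -- AM-HM
  have hAMHM : H ≤ t * y + (1 - t) * x := by
    rw [hH, div_le_iff₀ ha0]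
    nlinarith [mul_nonneg (mul_nonneg ht0 h1t) (sq_nonneg (x - y))]
  -- H ∈ I
  have hHI : H ∈ I := by
    rcases le_total x y with h | h
    · have hax : x ≤ a := by nlinarith
      have hay : a ≤ y := by nlinarith
      refine hconv.ordConnected.out hx hy ⟨?_, ?_⟩
      · rw [hH, le_div_iff₀ ha0]; nlinarith
      · rw [hH, div_le_iff₀ ha0]; nlinarith
    · have hax : y ≤ a := by nlinarith
      have hay : a ≤ x := by nlinarith
      refine hconv.ordConnected.out hy hx ⟨?_, ?_⟩
      · rw [hH, le_div_iff₀ ha0]; nlinarith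
      · rw [hH, div_le_iff₀ ha0]; nlinarith
  -- t*y + (1-t)*x ∈ I
  have hbI : t * y + (1 - t) * x ∈ I := by
    have := hconv hy hx ht0 h1t (by ring)
    simpa [smul_eq_mul] using this
  have h1 : f H ≤ f (t * y + (1 - t) * x) := hmono hHI hbI hAMHM
  have h2 : f (t * y + (1 - t) * x) ≤ t ^ s * f y + (1 - t) ^ s * f x :=
    hsc y hy x hx t (1 - t) ht0 h1t (by ring)
  calc f (x * y / a) ≤ f (t * y + (1 - t) * x) := h1
    _ ≤ _ := h2
end

section
/- If f : I → ℝ, with I ⊆ (0,∞) an interval, is harmonically s-convex and nonincreasing, then f is s-convex in the second sense. -/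
theorem harmonically_s_convex_nonincreasing_implies_s_convex
    (I : Set ℝ) (hI : I ⊆ Set.Ioi (0:ℝ)) (hconv : Convex ℝ I)
    (f : ℝ → ℝ) (s : ℝ) (hs : s ∈ Set.Ioc (0:ℝ) 1)
    (hhsc : ∀ x ∈ I, ∀ y ∈ I, ∀ t ∈ Set.Icc (0:ℝ) 1,
      f (x * y / (t * x + (1 - t) * y)) ≤ t ^ s * f y + (1 - t) ^ s * f x)
    (hanti : AntitoneOn f I) :
    ∀ x ∈ I, ∀ y ∈ I, ∀ α β : ℝ, 0 ≤ α → 0 ≤ β → α + β = 1 →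
      f (α * x + β * y) ≤ α ^ s * f x + β ^ s * f y := by
  intro x hx y hy α β hα hβ hαβ
  have hx0 : (0:ℝ) < x := hI hx
  have hy0 : (0:ℝ) < y := hI hy
  have hαβ' : α = 1 - β := by linarith
  have h1β : (0:ℝ) ≤ 1 - β := by linarith
  have hden : 0 < β * x + (1 - β) * y := by
    rcases le_total x y with h | h
    · nlinarith [mul_nonneg h1β (sub_nonneg.2 h)]
    · nlinarith [mul_nonneg hβ (sub_nonneg.2 h)]
  set H := x * y / (β * x + (1 - β) * y) with hH
  have key := hhsc x hx y hy β ⟨hβ, by linarith⟩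
  have hHmem : H ∈ I := by
    have hord := hconv.ordConnected
    have hmem : H ∈ Set.uIcc x y := by
      rw [Set.mem_uIcc]
      rcases le_total x y with h | h
      · left
        constructor
        · rw [le_div_iff₀ hden]
          nlinarith [mul_nonneg (mul_nonneg hβ hx0.le) (sub_nonneg.2 h)]
        · rw [div_le_iff₀ hden]
          nlinarith [mul_nonneg (mul_nonneg h1β hy0.le) (sub_nonneg.2 h)]
      · right
        constructor
        · rw [le_div_iff₀ hden]
          nlinarith [mul_nonneg (mul_nonneg h1β hy0.le) (sub_nonneg.2 h)]
        · rw [div_le_iff₀ hden]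
          nlinarith [mul_nonneg (mul_nonneg hβ hx0.le) (sub_nonneg.2 h)]
    exact hord.uIcc_subset hx hy hmem
  have hmem2 : α * x + β * y ∈ I := hconv hx hy hα hβ hαβ
  have hle : H ≤ α * x + β * y := by
    rw [hH, div_le_iff₀ hden, hαβ']
    nlinarith [mul_nonneg (mul_nonneg hβ h1β) (sq_nonneg (x - y))]
  calc f (α * x + β * y) ≤ f H := hanti hHmem hmem2 hle
    _ ≤ β ^ s * f y + (1 - β) ^ s * f x := key
    _ = α ^ s * f x + β ^ s * f y := by rw [hαβ']; ring
end

section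
/- Let f : I → ℝ with I ⊆ (0,∞) an interval be harmonically s-convex for some s ∈ (0,1], and let a,b ∈ I with a < b. If f is integrable on [a,b], then 2^{s-1} f(2ab/(a+b)) ≤ (ab/(b-a)) ∫_a^b f(x)/x² dx. -/
/-!
Substituting `x = ab/u` turns `ab ∫_a^b f(x)/x² dx` into `∫_a^b f(ab/u) du`. For `u ∈ [a, b]` the
points `ab/u` and `ab/(a+b-u)` lie in `[a, b]` and have harmonic mean `2ab/(a+b)`, so harmonic
`s`-convexity at `t = 1/2` gives `2^s f(2ab/(a+b)) ≤ f(ab/u) + f(ab/(a+b-u))`. Integrating over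
`[a, b]`, where `u ↦ a+b-u` preserves the integral, yields
`(b-a) 2^s f(2ab/(a+b)) ≤ 2ab ∫_a^b f(x)/x² dx`.
-/

open MeasureTheory Set intervalIntegral

theorem mapsTo_mul_div_Icc {a b : ℝ} (ha : 0 < a) :
    MapsTo (fun u => a * b / u) (Icc a b) (Icc a b) := by
  rintro u ⟨hau, hub⟩
  have hu : 0 < u := ha.trans_le hau
  have hb : 0 < b := hu.trans_le hub
  constructor
  · rw [le_div_iff₀ hu]; exact mul_le_mul_of_nonneg_left hub ha.le
  · rw [div_le_iff₀ hu, mul_comm b]; exact mul_le_mul_of_nonneg_right hau hb.le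

theorem image_mul_div_Icc {a b : ℝ} (ha : 0 < a) :
    (fun u => a * b / u) '' Icc a b = Icc a b := by
  refine (mapsTo_mul_div_Icc ha).image_subset.antisymm fun x hx => ?_
  have hab : a * b ≠ 0 := mul_ne_zero ha.ne' (ha.trans_le (hx.1.trans hx.2)).ne'
  exact ⟨a * b / x, mapsTo_mul_div_Icc ha hx, div_div_cancel₀ hab⟩

theorem injOn_mul_div_Icc {a b : ℝ} (ha : 0 < a) : InjOn (fun u => a * b / u) (Icc a b) := by
  intro u hu v _ huv
  have hab : a * b ≠ 0 := mul_ne_zero ha.ne' (ha.trans_le (hu.1.trans hu.2)).ne'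
  simpa only [div_div_cancel₀ hab] using congrArg (a * b / ·) huv

theorem IntervalIntegrable.div_sq {a b : ℝ} {f : ℝ → ℝ} (hf : IntervalIntegrable f volume a b)
    (h0 : (0 : ℝ) ∉ uIcc a b) : IntervalIntegrable (fun x => f x / x ^ 2) volume a b := by
  have hcont : ContinuousOn (fun x : ℝ => (x ^ 2)⁻¹) (uIcc a b) :=
    (continuousOn_pow 2).inv₀ fun x hx => pow_ne_zero 2 (ne_of_mem_of_not_mem hx h0)
  simpa only [div_eq_mul_inv] using hf.mul_continuousOn hcont

section ChangeOfVariables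

variable {a b : ℝ} (f : ℝ → ℝ)

theorem hasDerivWithinAt_mul_div_Icc (ha : 0 < a) :
    ∀ u ∈ Icc a b, HasDerivWithinAt (fun u => a * b / u) (a * b * -(u ^ 2)⁻¹) (Icc a b) u := by
  intro u hu
  simpa only [div_eq_mul_inv] using
    ((hasDerivAt_inv (ha.trans_le hu.1).ne').const_mul (a * b)).hasDerivWithinAt

theorem abs_deriv_smul_comp_mul_div (ha : 0 < a) {u : ℝ} (hu : u ∈ Icc a b) :
    |a * b * -(u ^ 2)⁻¹| • (f (a * b / u) / (a * b / u) ^ 2) = (a * b)⁻¹ * f (a * b / u) := by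
  have hu0 : 0 < u := ha.trans_le hu.1
  have hb : 0 < b := hu0.trans_le hu.2
  rw [mul_neg, abs_neg, abs_of_pos (by positivity), smul_eq_mul]
  field_simp

theorem intervalIntegrable_comp_mul_div (ha : 0 < a) (hab : a ≤ b)
    (hf : IntervalIntegrable (fun x => f x / x ^ 2) volume a b) :
    IntervalIntegrable (fun u => f (a * b / u)) volume a b := by
  rw [intervalIntegrable_iff_integrableOn_Icc_of_le hab] at hf ⊢
  rw [← image_mul_div_Icc ha, integrableOn_image_iff_integrableOn_abs_deriv_smul measurableSet_Icc
    (hasDerivWithinAt_mul_div_Icc ha) (injOn_mul_div_Icc ha)] at hf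
  have hab0 : a * b ≠ 0 := mul_ne_zero ha.ne' (ha.trans_le hab).ne'
  rwa [integrableOn_congr_fun (fun u hu => abs_deriv_smul_comp_mul_div f ha hu) measurableSet_Icc,
    IntegrableOn, integrable_const_mul_iff (inv_ne_zero hab0).isUnit] at hf

theorem integral_comp_mul_div (ha : 0 < a) (hab : a ≤ b) :
    ∫ u in a..b, f (a * b / u) = a * b * ∫ x in a..b, f x / x ^ 2 := by
  have hab0 : a * b ≠ 0 := mul_ne_zero ha.ne' (ha.trans_le hab).ne'
  rw [integral_of_le hab, integral_of_le hab, ← integral_Icc_eq_integral_Ioc,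
    ← integral_Icc_eq_integral_Ioc]
  conv_rhs => rw [← image_mul_div_Icc ha, integral_image_eq_integral_abs_deriv_smul measurableSet_Icc
    (hasDerivWithinAt_mul_div_Icc ha) (injOn_mul_div_Icc ha),
    setIntegral_congr_fun measurableSet_Icc (fun u hu => abs_deriv_smul_comp_mul_div f ha hu),
    MeasureTheory.integral_const_mul, mul_inv_cancel_left₀ hab0]

end ChangeOfVariables

def HarmonicallySConvexOn (s : ℝ) (I : Set ℝ) (f : ℝ → ℝ) : Prop :=
  ∀ x ∈ I, ∀ y ∈ I, ∀ t ∈ Icc (0 : ℝ) 1,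
    f (x * y / (t * x + (1 - t) * y)) ≤ t ^ s * f y + (1 - t) ^ s * f x

theorem HarmonicallySConvexOn.two_rpow_mul_le_add {s : ℝ} {I : Set ℝ} {f : ℝ → ℝ}
    (hf : HarmonicallySConvexOn s I f) {x y : ℝ} (hx : x ∈ I) (hy : y ∈ I) :
    2 ^ s * f (2 * x * y / (x + y)) ≤ f x + f y := by
  have h := hf x hx y hy (1 / 2) ⟨by norm_num, by norm_num⟩
  have hmean : x * y / (1 / 2 * x + (1 - 1 / 2) * y) = 2 * x * y / (x + y) := by
    rw [show 1 / 2 * x + (1 - 1 / 2) * y = (x + y) / 2 by ring, div_div_eq_mul_div]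
    ring
  rw [hmean, show (1 : ℝ) - 1 / 2 = 1 / 2 by norm_num, ← mul_add, one_div,
    Real.inv_rpow zero_le_two, le_inv_mul_iff₀ (by positivity)] at h
  linarith

theorem HarmonicallySConvexOn.two_rpow_mul_le_add_comp_mul_div {s : ℝ} {I : Set ℝ}
    {f : ℝ → ℝ} (hf : HarmonicallySConvexOn s I f) {a b : ℝ} (ha : 0 < a) (hI : Icc a b ⊆ I)
    {u : ℝ} (hu : u ∈ Icc a b) :
    2 ^ s * f (2 * a * b / (a + b)) ≤ f (a * b / u) + f (a * b / (a + b - u)) := by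
  have hu' : a + b - u ∈ Icc a b := ⟨by linarith [hu.2], by linarith [hu.1]⟩
  have hmean : 2 * (a * b / u) * (a * b / (a + b - u)) / (a * b / u + a * b / (a + b - u))
      = 2 * a * b / (a + b) := by
    have := ha.trans_le hu.1
    have := ha.trans_le hu'.1
    have := ha.trans_le (hu.1.trans hu.2)
    field_simp
    ring
  rw [← hmean]
  exact hf.two_rpow_mul_le_add (hI (mapsTo_mul_div_Icc ha hu)) (hI (mapsTo_mul_div_Icc ha hu'))

theorem sub_mul_le_two_mul_integral_of_le_add_comp_sub {g : ℝ → ℝ} {a b c : ℝ} (hab : a ≤ b)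
    (hg : IntervalIntegrable g volume a b) (h : ∀ u ∈ Icc a b, c ≤ g u + g (a + b - u)) :
    (b - a) * c ≤ 2 * ∫ u in a..b, g u := by
  have hg' : IntervalIntegrable (fun u => g (a + b - u)) volume a b := by
    simpa using (hg.comp_sub_left (a + b)).symm
  calc (b - a) * c = ∫ _ in a..b, c := by rw [intervalIntegral.integral_const, smul_eq_mul]
    _ ≤ ∫ u in a..b, (g u + g (a + b - u)) := integral_mono_on hab (by simp) (hg.add hg') h
    _ = 2 * ∫ u in a..b, g u := by
      rw [integral_add hg hg', integral_comp_sub_left, add_sub_cancel_right, add_sub_cancel_left,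
        two_mul]

theorem hermite_hadamard_left_harmonically_s_convex_general
    (I : Set ℝ) (hI : I ⊆ Set.Ioi (0:ℝ)) (hconv : Convex ℝ I)
    (f : ℝ → ℝ) (s : ℝ)
    (hhsc : ∀ x ∈ I, ∀ y ∈ I, ∀ t ∈ Set.Icc (0:ℝ) 1,
      f (x * y / (t * x + (1 - t) * y)) ≤ t ^ s * f y + (1 - t) ^ s * f x)
    (a b : ℝ) (ha : a ∈ I) (hb : b ∈ I) (hab : a < b)
    (hint : IntervalIntegrable f MeasureTheory.volume a b) :
    (2:ℝ) ^ (s - 1) * f (2 * a * b / (a + b)) ≤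
      (a * b / (b - a)) * ∫ x in a..b, f x / x ^ 2 := by
  have ha0 : 0 < a := hI ha
  have hIcc : Icc a b ⊆ I := hconv.ordConnected.out ha hb
  have hf : HarmonicallySConvexOn s I f := hhsc
  have h0 : (0 : ℝ) ∉ uIcc a b := by
    rw [uIcc_of_le hab.le]
    exact fun h => ha0.not_ge h.1
  have key := sub_mul_le_two_mul_integral_of_le_add_comp_sub hab.le
    (intervalIntegrable_comp_mul_div f ha0 hab.le (hint.div_sq h0))
    fun u hu => hf.two_rpow_mul_le_add_comp_mul_div ha0 hIcc hu
  rw [integral_comp_mul_div f ha0 hab.le] at key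
  rw [Real.rpow_sub_one two_ne_zero, div_mul_eq_mul_div, div_le_iff₀ two_pos, div_mul_eq_mul_div,
    div_mul_eq_mul_div, le_div_iff₀ (sub_pos.2 hab)]
  linarith

theorem hermite_hadamard_left_harmonically_s_convex
    (I : Set ℝ) (hI : I ⊆ Set.Ioi (0:ℝ)) (hconv : Convex ℝ I)
    (f : ℝ → ℝ) (s : ℝ) (hs : s ∈ Set.Ioc (0:ℝ) 1)
    (hhsc : ∀ x ∈ I, ∀ y ∈ I, ∀ t ∈ Set.Icc (0:ℝ) 1,
      f (x * y / (t * x + (1 - t) * y)) ≤ t ^ s * f y + (1 - t) ^ s * f x)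
    (a b : ℝ) (ha : a ∈ I) (hb : b ∈ I) (hab : a < b)
    (hint : IntervalIntegrable f MeasureTheory.volume a b) :
    (2:ℝ) ^ (s - 1) * f (2 * a * b / (a + b)) ≤
      (a * b / (b - a)) * ∫ x in a..b, f x / x ^ 2 :=
  hermite_hadamard_left_harmonically_s_convex_general I hI hconv f s hhsc a b ha hb hab hint
end

section
/- Let f : I → ℝ with I ⊆ (0,∞) an interval be harmonically s-convex for some s ∈ (0,1], and let a,b ∈ I with a < b. If f is integrable on [a,b], then (ab/(b-a)) ∫_a^b f(x)/x² dx ≤ (f(a)+f(b))/(s+1). -/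
/-!
The substitution `x = ((1 - t) / a + t / b)⁻¹`, the harmonic interpolation between `a` and `b`,
has `dx / x ^ 2 = (1 / a - 1 / b) dt`, so `(a b / (b - a)) ∫_a^b f x / x ^ 2 dx` is the mean of
`t ↦ f (a b / (t a + (1 - t) b))` over `[0, 1]`. Harmonic `s`-convexity bounds this integrand by
`t ^ s f b + (1 - t) ^ s f a`, whose integral is `(f a + f b) / (s + 1)`.
-/

open MeasureTheory Set

theorem image_inv_Ioo_of_pos {K : Type*} [Field K] [LinearOrder K] [IsStrictOrderedRing K]
    {a b : K} (ha : 0 < a) (hb : 0 < b) : Inv.inv '' Ioo a b = Ioo b⁻¹ a⁻¹ := by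
  ext x
  rw [image_inv_eq_inv, mem_inv, mem_Ioo, mem_Ioo]
  constructor
  · rintro ⟨hax, hxb⟩
    have hx : 0 < x := inv_pos.1 (ha.trans hax)
    exact ⟨(inv_lt_comm₀ hx hb).1 hxb, (lt_inv_comm₀ ha hx).1 hax⟩
  · rintro ⟨hbx, hxa⟩
    have hx : 0 < x := (inv_pos.2 hb).trans hbx
    exact ⟨(lt_inv_comm₀ ha hx).2 hxa, (inv_lt_comm₀ hx hb).2 hbx⟩

noncomputable def harmonicLineMap (a b t : ℝ) : ℝ := ((1 - t) * a⁻¹ + t * b⁻¹)⁻¹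

theorem harmonicLineMap_eq {a b : ℝ} (ha : a ≠ 0) (hb : b ≠ 0) (t : ℝ) :
    harmonicLineMap a b t = a * b / (t * a + (1 - t) * b) := by
  have h : (1 - t) * a⁻¹ + t * b⁻¹ = (t * a + (1 - t) * b) / (a * b) := by
    field_simp
    ring
  rw [harmonicLineMap, h, inv_div]

theorem hasDerivAt_harmonicLineMap (a b t : ℝ) (ht : harmonicLineMap a b t ≠ 0) :
    HasDerivAt (harmonicLineMap a b) ((a⁻¹ - b⁻¹) * harmonicLineMap a b t ^ 2) t := by
  have hℓ : HasDerivAt (fun t => (1 - t) * a⁻¹ + t * b⁻¹) (b⁻¹ - a⁻¹) t :=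
    ((((hasDerivAt_id' t).const_sub 1).mul_const a⁻¹).add
      ((hasDerivAt_id' t).mul_const b⁻¹)).congr_deriv (by ring)
  exact (hℓ.inv (by simpa [harmonicLineMap] using ht)).congr_deriv
    (by simp only [harmonicLineMap, inv_pow]; ring)

section

variable {a b : ℝ} (ha : 0 < a) (hab : a < b)
include ha hab

theorem image_harmonicLineMap_Ioo : harmonicLineMap a b '' Ioo 0 1 = Ioo a b := by
  have hb : 0 < b := ha.trans hab
  have h : harmonicLineMap a b = Inv.inv ∘ fun t : ℝ => (1 - t) • a⁻¹ + t • b⁻¹ := rfl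
  rw [h, image_comp, ← openSegment_eq_image, openSegment_symm,
    openSegment_eq_Ioo (inv_strictAnti₀ ha hab),
    image_inv_Ioo_of_pos (inv_pos.2 hb) (inv_pos.2 ha), inv_inv, inv_inv]

theorem injOn_harmonicLineMap : InjOn (harmonicLineMap a b) (Ioo 0 1) := by
  intro t₁ _ t₂ _ h
  have hne : b⁻¹ - a⁻¹ ≠ 0 := sub_ne_zero.2 (inv_strictAnti₀ ha hab).ne
  have := inv_inj.1 h
  exact mul_right_cancel₀ hne (by linarith)

theorem harmonicLineMap_pos {t : ℝ} (ht : t ∈ Ioo 0 1) : 0 < harmonicLineMap a b t :=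
  ha.trans (image_harmonicLineMap_Ioo ha hab ▸ mem_image_of_mem _ ht).1

theorem hasDerivWithinAt_harmonicLineMap_Ioo {t : ℝ} (ht : t ∈ Ioo 0 1) :
    HasDerivWithinAt (harmonicLineMap a b) ((a⁻¹ - b⁻¹) * harmonicLineMap a b t ^ 2)
      (Ioo 0 1) t :=
  (hasDerivAt_harmonicLineMap a b t (harmonicLineMap_pos ha hab ht).ne').hasDerivWithinAt

theorem eqOn_abs_deriv_harmonicLineMap_smul (g : ℝ → ℝ) :
    EqOn (fun t => |(a⁻¹ - b⁻¹) * harmonicLineMap a b t ^ 2| •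
        (g (harmonicLineMap a b t) / harmonicLineMap a b t ^ 2))
      (fun t => (a⁻¹ - b⁻¹) * g (harmonicLineMap a b t)) (Ioo 0 1) := by
  intro t ht
  have hφ := (harmonicLineMap_pos ha hab ht).ne'
  have hc : 0 ≤ a⁻¹ - b⁻¹ := sub_nonneg.2 (inv_anti₀ ha hab.le)
  simp only [smul_eq_mul, abs_mul, abs_of_nonneg hc, abs_sq]
  field_simp

theorem integral_div_sq_eq_integral_harmonicLineMap (g : ℝ → ℝ) :
    ∫ x in a..b, g x / x ^ 2 =
      (a⁻¹ - b⁻¹) * ∫ t in (0:ℝ)..1, g (harmonicLineMap a b t) := by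
  rw [intervalIntegral.integral_of_le hab.le, intervalIntegral.integral_of_le zero_le_one,
    integral_Ioc_eq_integral_Ioo, integral_Ioc_eq_integral_Ioo,
    ← image_harmonicLineMap_Ioo ha hab,
    integral_image_eq_integral_abs_deriv_smul measurableSet_Ioo
      (fun _ => hasDerivWithinAt_harmonicLineMap_Ioo ha hab) (injOn_harmonicLineMap ha hab),
    setIntegral_congr_fun measurableSet_Ioo (eqOn_abs_deriv_harmonicLineMap_smul ha hab g),
    integral_const_mul]

theorem intervalIntegrable_div_sq_iff (g : ℝ → ℝ) :
    IntervalIntegrable (fun x => g x / x ^ 2) volume a b ↔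
      IntervalIntegrable (fun t => g (harmonicLineMap a b t)) volume 0 1 := by
  have hc : a⁻¹ - b⁻¹ ≠ 0 := sub_ne_zero.2 (inv_strictAnti₀ ha hab).ne'
  rw [intervalIntegrable_iff_integrableOn_Ioo_of_le hab.le,
    intervalIntegrable_iff_integrableOn_Ioo_of_le zero_le_one,
    ← image_harmonicLineMap_Ioo ha hab,
    integrableOn_image_iff_integrableOn_abs_deriv_smul measurableSet_Ioo
      (fun _ => hasDerivWithinAt_harmonicLineMap_Ioo ha hab) (injOn_harmonicLineMap ha hab),
    integrableOn_congr_fun (eqOn_abs_deriv_harmonicLineMap_smul ha hab g) measurableSet_Ioo]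
  exact integrable_const_mul_iff hc.isUnit _

end

theorem intervalIntegrable_one_sub_rpow {s : ℝ} (hs : -1 < s) :
    IntervalIntegrable (fun t : ℝ => (1 - t) ^ s) volume 0 1 := by
  simpa using
    ((intervalIntegral.intervalIntegrable_rpow' hs (a := 0) (b := 1)).comp_sub_left 1).symm

theorem integral_rpow_mul_add_one_sub_rpow_mul {s : ℝ} (hs : -1 < s) (c d : ℝ) :
    ∫ t in (0:ℝ)..1, (t ^ s * c + (1 - t) ^ s * d) = (c + d) / (s + 1) := by
  have hs' : s + 1 ≠ 0 := by linarith
  have h₁ : ∫ t in (0:ℝ)..1, t ^ s = 1 / (s + 1) := by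
    rw [integral_rpow (Or.inl hs), Real.one_rpow, Real.zero_rpow hs', sub_zero]
  have h₂ : ∫ t in (0:ℝ)..1, (1 - t) ^ s = 1 / (s + 1) := by
    simpa [h₁] using
      intervalIntegral.integral_comp_sub_left (fun t : ℝ => t ^ s) (1 : ℝ) (a := 0) (b := 1)
  rw [intervalIntegral.integral_add ((intervalIntegral.intervalIntegrable_rpow' hs).mul_const c)
      ((intervalIntegrable_one_sub_rpow hs).mul_const d),
    intervalIntegral.integral_mul_const, intervalIntegral.integral_mul_const, h₁, h₂]
  ring

theorem hermite_hadamard_right_harmonically_s_convex_general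
    (I : Set ℝ) (hI : I ⊆ Set.Ioi (0:ℝ))
    (f : ℝ → ℝ) (s : ℝ) (hs : s ∈ Set.Ioc (0:ℝ) 1)
    (hhsc : ∀ x ∈ I, ∀ y ∈ I, ∀ t ∈ Set.Icc (0:ℝ) 1,
      f (x * y / (t * x + (1 - t) * y)) ≤ t ^ s * f y + (1 - t) ^ s * f x)
    (a b : ℝ) (ha : a ∈ I) (hb : b ∈ I) (hab : a < b)
    (hint : IntervalIntegrable f MeasureTheory.volume a b) :
    (a * b / (b - a)) * ∫ x in a..b, f x / x ^ 2 ≤ (f a + f b) / (s + 1) := by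
  have ha₀ : 0 < a := hI ha
  have hb₀ : 0 < b := hI hb
  have hs₁ : -1 < s := by linarith [hs.1]
  have hcomp : IntervalIntegrable (fun t => f (harmonicLineMap a b t)) volume 0 1 := by
    refine (intervalIntegrable_div_sq_iff ha₀ hab f).1 ?_
    simpa only [div_eq_mul_inv] using hint.mul_continuousOn (g := fun x => (x ^ 2)⁻¹)
      ((continuousOn_id' _).pow 2 |>.inv₀ fun x hx =>
        pow_ne_zero 2 (ha₀.trans_le (uIcc_of_le hab.le ▸ hx).1).ne')
  calc a * b / (b - a) * ∫ x in a..b, f x / x ^ 2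
      = ∫ t in (0:ℝ)..1, f (harmonicLineMap a b t) := by
        have hscale : a * b / (b - a) * (a⁻¹ - b⁻¹) = 1 := by
          field_simp [sub_ne_zero.2 hab.ne']
        rw [integral_div_sq_eq_integral_harmonicLineMap ha₀ hab, ← mul_assoc, hscale, one_mul]
    _ ≤ ∫ t in (0:ℝ)..1, (t ^ s * f b + (1 - t) ^ s * f a) := by
        refine intervalIntegral.integral_mono_on zero_le_one hcomp
          (((intervalIntegral.intervalIntegrable_rpow' hs₁).mul_const _).add
            ((intervalIntegrable_one_sub_rpow hs₁).mul_const _)) fun t ht => ?_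
        rw [harmonicLineMap_eq ha₀.ne' hb₀.ne']
        exact hhsc a ha b hb t ht
    _ = (f a + f b) / (s + 1) := by
        rw [integral_rpow_mul_add_one_sub_rpow_mul hs₁, add_comm (f b)]

theorem hermite_hadamard_right_harmonically_s_convex
    (I : Set ℝ) (hI : I ⊆ Set.Ioi (0:ℝ)) (hconv : Convex ℝ I)
    (f : ℝ → ℝ) (s : ℝ) (hs : s ∈ Set.Ioc (0:ℝ) 1)
    (hhsc : ∀ x ∈ I, ∀ y ∈ I, ∀ t ∈ Set.Icc (0:ℝ) 1,
      f (x * y / (t * x + (1 - t) * y)) ≤ t ^ s * f y + (1 - t) ^ s * f x)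
    (a b : ℝ) (ha : a ∈ I) (hb : b ∈ I) (hab : a < b)
    (hint : IntervalIntegrable f MeasureTheory.volume a b) :
    (a * b / (b - a)) * ∫ x in a..b, f x / x ^ 2 ≤ (f a + f b) / (s + 1) :=
  hermite_hadamard_right_harmonically_s_convex_general I hI f s hs hhsc a b ha hb hab hint
end
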